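/- arXiv:1308.4392 — 6 statements merged into one kernel-verified Lean document; each statement's English description precedes it below -/
import Mathlib

section
/- The polynomial g(x) = 2x^6 - 3a x^5 + 3a x - 2a^2 has strictly positive derivative on the open interval (0,1), i.e., g'(x) = 12x^5 - 15a x^4 + 3a > 0 for all x in (0,1). -/
/-! Since `4x⁵ - 5x⁴ + 1 = (1 - x)²(4x³ + 3x² + 2x + 1)`, the derivative splits as
`12(1 - a)x⁵ + 3a(1 - x)²(4x³ + 3x² + 2x + 1)`, a positive term plus a nonnegative one. -/

lemma hasDerivAt_sextic (a x : ℝ) :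
    HasDerivAt (fun x : ℝ => 2 * x ^ 6 - 3 * a * x ^ 5 + 3 * a * x - 2 * a ^ 2)
      (12 * x ^ 5 - 15 * a * x ^ 4 + 3 * a) x := by
  have h := ((((hasDerivAt_pow 6 x).const_mul 2).sub
    ((hasDerivAt_pow 5 x).const_mul (3 * a))).add
    ((hasDerivAt_id x).const_mul (3 * a))).sub_const (2 * a ^ 2)
  exact h.congr_deriv (by norm_num; ring)

lemma sextic_deriv_eq (a x : ℝ) :
    12 * x ^ 5 - 15 * a * x ^ 4 + 3 * a =
      12 * (1 - a) * x ^ 5 + 3 * a * ((1 - x) ^ 2 * (4 * x ^ 3 + 3 * x ^ 2 + 2 * x + 1)) := by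
  ring

lemma sextic_deriv_pos {a x : ℝ} (ha0 : 0 ≤ a) (ha1 : a < 1) (hx : 0 < x) :
    0 < 12 * x ^ 5 - 15 * a * x ^ 4 + 3 * a := by
  rw [sextic_deriv_eq]
  have h1a : 0 < 1 - a := sub_pos.mpr ha1
  exact add_pos_of_pos_of_nonneg (by positivity) (by positivity)

theorem stmt_0 (a : ℝ) (ha0 : 0 < a) (ha1 : a < 1) :
    ∀ x : ℝ, 0 < x → x < 1 →
      HasDerivAt (fun x : ℝ => 2 * x ^ 6 - 3 * a * x ^ 5 + 3 * a * x - 2 * a ^ 2)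
        (12 * x ^ 5 - 15 * a * x ^ 4 + 3 * a) x ∧
      12 * x ^ 5 - 15 * a * x ^ 4 + 3 * a > 0 :=
  fun x hx0 _ => ⟨hasDerivAt_sextic a x, sextic_deriv_pos ha0.le ha1 hx0⟩
end

section
/- If α₀ is the unique root in (0,1) of 2x^6 - 3a x^5 + 3a x - 2a^2 = 0, then α₀ > 2a/3. Consequently c² := (3α₀ - 2a)/(5α₀³) is positive. -/
lemma sextic_eq_mul_add_mul (a x : ℝ) :
    2 * x ^ 6 - 3 * a * x ^ 5 + 3 * a * x - 2 * a ^ 2 =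
      x ^ 5 * (2 * x - 3 * a) + a * (3 * x - 2 * a) := by
  ring

lemma sextic_neg_of_le {a x : ℝ} (ha : 0 < a) (hx : 0 < x) (hxa : x ≤ 2 * a / 3) :
    2 * x ^ 6 - 3 * a * x ^ 5 + 3 * a * x - 2 * a ^ 2 < 0 := by
  have hfirst : x ^ 5 * (2 * x - 3 * a) < 0 :=
    mul_neg_of_pos_of_neg (pow_pos hx 5) (by linarith)
  have hsecond : a * (3 * x - 2 * a) ≤ 0 :=
    mul_nonpos_of_nonneg_of_nonpos ha.le (by linarith)
  rw [sextic_eq_mul_add_mul]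
  linarith

theorem stmt_3_general (a α₀ : ℝ) (ha0 : 0 < a)
    (hα0 : 0 < α₀)
    (hroot : 2 * α₀ ^ 6 - 3 * a * α₀ ^ 5 + 3 * a * α₀ - 2 * a ^ 2 = 0) :
    α₀ > 2 * a / 3 ∧ (3 * α₀ - 2 * a) / (5 * α₀ ^ 3) > 0 := by
  have hgt : α₀ > 2 * a / 3 :=
    lt_of_not_ge fun hle => (sextic_neg_of_le ha0 hα0 hle).ne hroot
  exact ⟨hgt, div_pos (by linarith) (by positivity)⟩

theorem stmt_3 (a α₀ : ℝ) (ha0 : 0 < a) (ha1 : a < 1)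
    (hα0 : 0 < α₀) (hα1 : α₀ < 1)
    (hroot : 2 * α₀ ^ 6 - 3 * a * α₀ ^ 5 + 3 * a * α₀ - 2 * a ^ 2 = 0) :
    α₀ > 2 * a / 3 ∧ (3 * α₀ - 2 * a) / (5 * α₀ ^ 3) > 0 :=
  stmt_3_general a α₀ ha0 hα0 hroot
end

section
/- If α₀ ∈ (0,1) satisfies 2α₀^6 - 3a α₀^5 + 3a α₀ - 2a² = 0 with 0 < a < 1, then c := sqrt((3α₀ - 2a)/(5α₀³)) satisfies c < α₀, i.e., (3α₀ - 2a)/(5α₀³) < α₀². -/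
/-!
Read the root equation as `q(a) = 0` for the quadratic
`q(x) = 2x² - 3α₀(1 - α₀⁴)x - 2α₀⁶`. Its constant term is negative, so `a > 0` is its larger root
and `q` is negative only strictly below `a`. At `b = (3α₀ - 5α₀⁵)/2` one computes
`q(b) = -5α₀⁶(1 - α₀⁴) < 0`, hence `b < a`, which is the claim `3α₀ - 2a < 5α₀⁵`.
-/

lemma lt_of_quadratic_neg {c p r a x : ℝ} (hc : 0 < c) (hr : r < 0) (ha : 0 < a)
    (hroot : c * a ^ 2 + p * a + r = 0) (hx : c * x ^ 2 + p * x + r < 0) : x < a := by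
  by_contra! hax
  have hslope : 0 < c * a + p := by nlinarith
  have hdiff : c * x ^ 2 + p * x + r = (x - a) * (c * (x + a) + p) := by
    linear_combination hroot
  have hfactor : 0 ≤ c * (x + a) + p := by nlinarith
  linarith [mul_nonneg (sub_nonneg.mpr hax) hfactor]

theorem stmt_4_general (a α₀ : ℝ) (ha0 : 0 < a)
    (hα0 : 0 < α₀) (hα1 : α₀ < 1)
    (hroot : 2 * α₀ ^ 6 - 3 * a * α₀ ^ 5 + 3 * a * α₀ - 2 * a ^ 2 = 0) :
    (3 * α₀ - 2 * a) / (5 * α₀ ^ 3) < α₀ ^ 2 := by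
  rw [div_lt_iff₀ (by positivity)]
  set b := (3 * α₀ - 5 * α₀ ^ 5) / 2 with hb
  have hq_a : 2 * a ^ 2 + (-3 * α₀ * (1 - α₀ ^ 4)) * a + (-2 * α₀ ^ 6) = 0 := by
    linear_combination -hroot
  have hq_b : 2 * b ^ 2 + (-3 * α₀ * (1 - α₀ ^ 4)) * b + (-2 * α₀ ^ 6) < 0 := by
    have hα4 : α₀ ^ 4 < 1 := pow_lt_one₀ hα0.le hα1 (by norm_num)
    have : 0 < 5 * α₀ ^ 6 * (1 - α₀ ^ 4) := by have := sub_pos.mpr hα4; positivity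
    linarith [show 2 * b ^ 2 + (-3 * α₀ * (1 - α₀ ^ 4)) * b + (-2 * α₀ ^ 6)
      = -(5 * α₀ ^ 6 * (1 - α₀ ^ 4)) by ring]
  have hba : b < a :=
    lt_of_quadratic_neg two_pos (by linarith [pow_pos hα0 6]) ha0 hq_a hq_b
  linarith [hb, show α₀ ^ 2 * (5 * α₀ ^ 3) = 5 * α₀ ^ 5 by ring]

theorem stmt_4 (a α₀ : ℝ) (ha0 : 0 < a) (ha1 : a < 1)
    (hα0 : 0 < α₀) (hα1 : α₀ < 1)
    (hroot : 2 * α₀ ^ 6 - 3 * a * α₀ ^ 5 + 3 * a * α₀ - 2 * a ^ 2 = 0) :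
    (3 * α₀ - 2 * a) / (5 * α₀ ^ 3) < α₀ ^ 2 :=
  stmt_4_general a α₀ ha0 hα0 hα1 hroot
end

section
/- For 0 < λ < 1, the equation x^6 - 3λx^4 + 3λx^2 - λ² = 0 has a unique solution x in the open interval (0,1). -/
/-!
In the variable `t = x ^ 2` the equation becomes the cubic
`t ^ 3 - 3 λ t ^ 2 + 3 λ t - λ ^ 2 = (t - λ) ^ 3 + λ (1 - λ) (3 t - λ) = 0`,
a sum of two strictly increasing functions of `t` when `0 < λ < 1`. Hence the left-hand side is
strictly increasing in `x ≥ 0`; it is `-λ ^ 2 < 0` at `x = 0` and `1 - λ ^ 2 > 0` at `x = 1`, so the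
intermediate value theorem gives exactly one root in `(0, 1)`.
-/

open Set

theorem existsUnique_mem_Ioo_eq_of_strictMonoOn {α δ : Type*} [ConditionallyCompleteLinearOrder α]
    [TopologicalSpace α] [OrderTopology α] [DenselyOrdered α] [LinearOrder δ] [TopologicalSpace δ]
    [OrderClosedTopology δ] {f : α → δ} {a b : α} {c : δ} (hab : a ≤ b)
    (hf : ContinuousOn f (Icc a b)) (hmono : StrictMonoOn f (Icc a b)) (hc : c ∈ Ioo (f a) (f b)) :
    ∃! x, x ∈ Ioo a b ∧ f x = c := by
  obtain ⟨x, hx, hfx⟩ := intermediate_value_Ioo hab hf hc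
  refine ⟨x, ⟨hx, hfx⟩, fun y ⟨hy, hfy⟩ => ?_⟩
  exact hmono.injOn (Ioo_subset_Icc_self hy) (Ioo_subset_Icc_self hx) (hfy.trans hfx.symm)

lemma cubic_eq_cube_add_linear (lam t : ℝ) :
    t ^ 3 - 3 * lam * t ^ 2 + 3 * lam * t - lam ^ 2 =
      (t - lam) ^ 3 + lam * (1 - lam) * (3 * t - lam) := by
  ring

lemma strictMono_cubic {lam : ℝ} (hl0 : 0 < lam) (hl1 : lam < 1) :
    StrictMono fun t : ℝ => t ^ 3 - 3 * lam * t ^ 2 + 3 * lam * t - lam ^ 2 := by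
  have hcoeff : 0 < lam * (1 - lam) := mul_pos hl0 (by linarith)
  have hcube : StrictMono fun t : ℝ => (t - lam) ^ 3 :=
    (Odd.strictMono_pow (by decide)).comp fun s t hst => by linarith
  have hlinear : StrictMono fun t : ℝ => lam * (1 - lam) * (3 * t - lam) :=
    fun s t hst => by nlinarith
  simpa only [cubic_eq_cube_add_linear] using hcube.add hlinear

theorem stmt_11 (lam : ℝ) (hl0 : 0 < lam) (hl1 : lam < 1) :
    ∃! x : ℝ, x ∈ Set.Ioo (0 : ℝ) 1 ∧
      x ^ 6 - 3 * lam * x ^ 4 + 3 * lam * x ^ 2 - lam ^ 2 = 0 := by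
  set p : ℝ → ℝ := fun t => t ^ 3 - 3 * lam * t ^ 2 + 3 * lam * t - lam ^ 2
  have hpoly (x : ℝ) : x ^ 6 - 3 * lam * x ^ 4 + 3 * lam * x ^ 2 - lam ^ 2 = p (x ^ 2) := by
    simp only [p]
    ring
  have hmono : StrictMonoOn (fun x : ℝ => p (x ^ 2)) (Icc 0 1) :=
    (strictMono_cubic hl0 hl1).comp_strictMonoOn
      ((pow_left_strictMonoOn₀ two_ne_zero).mono fun x hx => hx.1)
  have hsign : (0 : ℝ) ∈ Ioo (p (0 ^ 2)) (p (1 ^ 2)) := by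
    simp only [p]
    constructor <;> nlinarith
  simp only [hpoly]
  exact existsUnique_mem_Ioo_eq_of_strictMonoOn zero_le_one (by fun_prop) hmono hsign
end

section
/- Let 0 < λ < 1 and let α₀ ∈ (0,1) satisfy α₀^6 - 3λα₀^4 + 3λα₀^2 - λ² = 0. Then α₀ > sqrt(λ/3); equivalently α₀² > λ/3, and hence c := (3α₀² - λ)/(4α₀³) is positive. -/
/-! With `t = α₀²` the equation is the cubic `t³ - 3λt² + 3λt - λ² = (t - λ)³ + λ(1 - λ)(3t - λ)`.
For `t ≤ λ/3` both summands are negative or zero, the first strictly, so no root lies there. -/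

theorem cubic_eq_sub_pow_three_add (t l : ℝ) :
    t ^ 3 - 3 * l * t ^ 2 + 3 * l * t - l ^ 2 = (t - l) ^ 3 + l * (1 - l) * (3 * t - l) := by
  ring

theorem div_three_lt_of_cubic_eq_zero {t l : ℝ} (hl0 : 0 < l) (hl1 : l ≤ 1)
    (hroot : t ^ 3 - 3 * l * t ^ 2 + 3 * l * t - l ^ 2 = 0) : l / 3 < t := by
  by_contra! ht
  have hcube : (t - l) ^ 3 < 0 := Odd.pow_neg (by decide) (by linarith)
  have hlin : l * (1 - l) * (3 * t - l) ≤ 0 :=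
    mul_nonpos_of_nonneg_of_nonpos (mul_nonneg hl0.le (by linarith)) (by linarith)
  linarith [cubic_eq_sub_pow_three_add t l]

theorem stmt_12_general (lam α₀ : ℝ) (hl0 : 0 < lam) (hl1 : lam < 1)
    (hα0 : 0 < α₀)
    (hroot : α₀ ^ 6 - 3 * lam * α₀ ^ 4 + 3 * lam * α₀ ^ 2 - lam ^ 2 = 0) :
    α₀ > Real.sqrt (lam / 3) ∧ α₀ ^ 2 > lam / 3 ∧
      (3 * α₀ ^ 2 - lam) / (4 * α₀ ^ 3) > 0 := by
  have hsq : lam / 3 < α₀ ^ 2 :=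
    div_three_lt_of_cubic_eq_zero hl0 hl1.le (by linear_combination hroot)
  exact ⟨(Real.sqrt_lt' hα0).2 hsq, hsq, div_pos (by linarith) (by positivity)⟩

theorem stmt_12 (lam α₀ : ℝ) (hl0 : 0 < lam) (hl1 : lam < 1)
    (hα0 : 0 < α₀) (hα1 : α₀ < 1)
    (hroot : α₀ ^ 6 - 3 * lam * α₀ ^ 4 + 3 * lam * α₀ ^ 2 - lam ^ 2 = 0) :
    α₀ > Real.sqrt (lam / 3) ∧ α₀ ^ 2 > lam / 3 ∧
      (3 * α₀ ^ 2 - lam) / (4 * α₀ ^ 3) > 0 :=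
  stmt_12_general lam α₀ hl0 hl1 hα0 hroot
end

section
/- Let 0 < λ < 1 and α₀ ∈ (0,1) satisfy α₀^6 - 3λα₀^4 + 3λα₀² - λ² = 0. Then c := (3α₀² - λ)/(4α₀³) satisfies c < α₀. -/
/-!
Read the root equation as a quadratic in `λ`: `λ² - bλ - a³ = 0` with `a = α₀²` and
`b = 3a(1 - a)`. The claim `c < α₀` says `μ < λ` for `μ = 3a - 4a²`, and at `μ` the quadratic
takes the value `-4a³(1 - a) < 0`, so `μ` lies below the positive root `λ`.
-/

theorem lt_of_quadratic_neg_of_pos_root {b p r x : ℝ} (hp : 0 ≤ p) (hr : 0 < r)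
    (hroot : r ^ 2 - b * r - p = 0) (hx : x ^ 2 - b * x - p < 0) : x < r := by
  by_contra! hrx
  have hfactor : r * (x ^ 2 - b * x - p) = (x - r) * (r * x + p) := by
    linear_combination x * hroot
  have hrhs_nonneg : 0 ≤ (x - r) * (r * x + p) :=
    mul_nonneg (sub_nonneg.2 hrx) (add_nonneg (mul_nonneg hr.le (hr.le.trans hrx)) hp)
  have hlhs_neg : r * (x ^ 2 - b * x - p) < 0 := mul_neg_of_pos_of_neg hr hx
  linarith

theorem stmt_13_general (lam α₀ : ℝ) (hl0 : 0 < lam)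
    (hα0 : 0 < α₀) (hα1 : α₀ < 1)
    (hroot : α₀ ^ 6 - 3 * lam * α₀ ^ 4 + 3 * lam * α₀ ^ 2 - lam ^ 2 = 0) :
    (3 * α₀ ^ 2 - lam) / (4 * α₀ ^ 3) < α₀ := by
  have hquad_at_mu : (3 * α₀ ^ 2 - 4 * α₀ ^ 4) ^ 2
      - 3 * α₀ ^ 2 * (1 - α₀ ^ 2) * (3 * α₀ ^ 2 - 4 * α₀ ^ 4) - α₀ ^ 6 < 0 := by
    have hα0_sq_lt : α₀ ^ 2 < 1 := pow_lt_one₀ hα0.le hα1 two_ne_zero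
    have hval : 0 < 4 * α₀ ^ 6 * (1 - α₀ ^ 2) := by
      have := sub_pos.2 hα0_sq_lt
      positivity
    linear_combination hval
  have hmu_lt : 3 * α₀ ^ 2 - 4 * α₀ ^ 4 < lam :=
    lt_of_quadratic_neg_of_pos_root (by positivity) hl0 (by linear_combination -hroot) hquad_at_mu
  rw [div_lt_iff₀ (by positivity)]
  linarith

theorem stmt_13 (lam α₀ : ℝ) (hl0 : 0 < lam) (hl1 : lam < 1)
    (hα0 : 0 < α₀) (hα1 : α₀ < 1)
    (hroot : α₀ ^ 6 - 3 * lam * α₀ ^ 4 + 3 * lam * α₀ ^ 2 - lam ^ 2 = 0) :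
    (3 * α₀ ^ 2 - lam) / (4 * α₀ ^ 3) < α₀ :=
  stmt_13_general lam α₀ hl0 hα0 hα1 hroot
end
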